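/- arXiv:2605.28492 — 2 statements merged into one kernel-verified Lean document; each statement's English description precedes it below -/
import Mathlib

section
/- Assume WRP(ω₂). Then WCC⁺ holds: for every function F : ω₂^{<ω} → ω₂ there exists a function G : ω₂^{<ω} → ω₂ such that for every countable X ⊆ ω₂ closed under G there is a countable Y ⊆ ω₂ with X ⊊ Y, X ∩ ω₁ = Y ∩ ω₁, and Y closed under F. -/
noncomputable section

open Cardinal

/-- The first uncountable cardinal, as an ordinal. -/
def omega1 : Ordinal.{0} := (aleph 1).ord

/-- The second uncountable cardinal, as an ordinal. -/
def omega2 : Ordinal.{0} := (aleph 2).ord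

/-- `X` is closed under `f : A^{<ω} → A` (modelled on all finite sequences of ordinals):
`f s ∈ X` for every finite sequence `s` of elements of `X`. -/
def ClosedUnder (f : List Ordinal.{0} → Ordinal) (X : Set Ordinal.{0}) : Prop :=
  ∀ s : List Ordinal.{0}, (∀ x ∈ s, x ∈ X) → f s ∈ X

/-- `f` maps finite sequences of ordinals below `A` to ordinals below `A`,
i.e. `f` codes a function `A^{<ω} → A`. -/
def IntoBelow (A : Ordinal.{0}) (f : List Ordinal.{0} → Ordinal) : Prop :=
  ∀ s : List Ordinal.{0}, (∀ x ∈ s, x < A) → f s < A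

/-- `S` is stationary in `[A]^ω`: for every `f : A^{<ω} → A` there is a countable
`X ⊆ A` closed under `f` with `X ∈ S`. -/
def StationaryIn (A : Ordinal.{0}) (S : Set (Set Ordinal.{0})) : Prop :=
  ∀ f : List Ordinal.{0} → Ordinal, IntoBelow A f →
    ∃ X : Set Ordinal.{0}, X.Countable ∧ (∀ x ∈ X, x < A) ∧ ClosedUnder f X ∧ X ∈ S

/-- The weak reflection principle `WRP(ω₂)`: every stationary `S ⊆ [ω₂]^ω` reflects
to `[λ]^ω` for some `ω₁ ≤ λ < ω₂`. -/
def WRP2 : Prop :=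
  ∀ S : Set (Set Ordinal.{0}),
    (∀ X ∈ S, X.Countable ∧ ∀ x ∈ X, x < omega2) →
    StationaryIn omega2 S →
    ∃ lam : Ordinal.{0}, omega1 ≤ lam ∧ lam < omega2 ∧
      StationaryIn lam {X | X ∈ S ∧ ∀ x ∈ X, x < lam}

/-- `C` is a club subset of `ω₁`: a set of ordinals below `ω₁`, unbounded in `ω₁`,
and closed under suprema of its nonempty subsets that are bounded below `ω₁`. -/
def ClubInOmega1 (C : Set Ordinal.{0}) : Prop :=
  (∀ o ∈ C, o < omega1) ∧
  (∀ a < omega1, ∃ b ∈ C, a < b) ∧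
  (∀ D : Set Ordinal.{0}, D ⊆ C → D.Nonempty → (∃ b < omega1, ∀ x ∈ D, x ≤ b) → sSup D ∈ C)

/-- `T` is stationary in `ω₁`: `T ⊆ ω₁` meets every club subset of `ω₁`. -/
def StationaryInOmega1 (T : Set Ordinal.{0}) : Prop :=
  (∀ o ∈ T, o < omega1) ∧ ∀ C : Set Ordinal.{0}, ClubInOmega1 C → (T ∩ C).Nonempty

/-- `clf f Z`: the smallest set of ordinals containing `Z` and closed under `f`. -/
def clf (f : List Ordinal.{0} → Ordinal) (Z : Set Ordinal.{0}) : Set Ordinal.{0} :=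
  ⋂₀ {W : Set Ordinal.{0} | Z ⊆ W ∧ ClosedUnder f W}

end

noncomputable section WCCaux

/-- Iterative closure levels. -/
def clIter (F : List Ordinal.{0} → Ordinal) (Z : Set Ordinal.{0}) : ℕ → Set Ordinal.{0}
  | 0 => Z
  | n + 1 => clIter F Z n ∪ (fun l => F l) '' {l : List Ordinal.{0} | ∀ x ∈ l, x ∈ clIter F Z n}

/-- The closure of `Z` under `F`, as a countable union of levels. -/
def clw (F : List Ordinal.{0} → Ordinal) (Z : Set Ordinal.{0}) : Set Ordinal.{0} :=
  ⋃ n, clIter F Z n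

lemma clIter_mono {F Z} : ∀ {m n : ℕ}, m ≤ n → clIter F Z m ⊆ clIter F Z n := by
  intro m n h
  induction n with
  | zero => cases Nat.le_zero.mp h; exact subset_rfl
  | succ n ih =>
    rcases Nat.lt_or_ge m (n+1) with h' | h'
    · exact (ih (Nat.lt_succ_iff.mp h')).trans Set.subset_union_left
    · cases le_antisymm h h'; exact subset_rfl

lemma subset_clw {F Z} : Z ⊆ clw F Z := by
  intro x hx
  exact Set.mem_iUnion.mpr ⟨0, hx⟩

lemma exists_level {F Z} (l : List Ordinal.{0}) (h : ∀ x ∈ l, x ∈ clw F Z) :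
    ∃ n, ∀ x ∈ l, x ∈ clIter F Z n := by
  induction l with
  | nil => exact ⟨0, by simp⟩
  | cons a t ih =>
    obtain ⟨n, hn⟩ := ih (fun x hx => h x (List.mem_cons_of_mem a hx))
    obtain ⟨m, hm⟩ := Set.mem_iUnion.mp (h a (List.mem_cons_self : a ∈ a :: t))
    refine ⟨max m n, ?_⟩
    intro x hx
    rcases List.mem_cons.mp hx with rfl | hx
    · exact clIter_mono (le_max_left m n) hm
    · exact clIter_mono (le_max_right m n) (hn x hx)

lemma clw_closed {F Z} : ClosedUnder F (clw F Z) := by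
  intro l hl
  obtain ⟨n, hn⟩ := exists_level l hl
  exact Set.mem_iUnion.mpr ⟨n + 1, Or.inr ⟨l, hn, rfl⟩⟩

lemma clw_min {F Z W} (hZW : Z ⊆ W) (hW : ClosedUnder F W) : clw F Z ⊆ W := by
  have main : ∀ n, clIter F Z n ⊆ W := by
    intro n
    induction n with
    | zero => exact hZW
    | succ n ih =>
      rintro x (hx | ⟨l, hl, rfl⟩)
      · exact ih hx
      · exact hW l (fun y hy => ih (hl y hy))
  intro x hx
  obtain ⟨n, hn⟩ := Set.mem_iUnion.mp hx
  exact main n hn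

lemma clw_mono {F Z₁ Z₂} (h : Z₁ ⊆ Z₂) : clw F Z₁ ⊆ clw F Z₂ :=
  clw_min (h.trans subset_clw) clw_closed

lemma countable_lists {s : Set Ordinal.{0}} (hs : s.Countable) :
    {l : List Ordinal.{0} | ∀ x ∈ l, x ∈ s}.Countable := by
  haveI := hs.to_subtype
  have key : ∀ l : List Ordinal.{0}, (∀ x ∈ l, x ∈ s) →
      ∃ L : List s, L.map Subtype.val = l := by
    intro l
    induction l with
    | nil => exact fun _ => ⟨[], rfl⟩
    | cons a t ih =>
      intro h
      obtain ⟨L, hL⟩ := ih (fun x hx => h x (List.mem_cons_of_mem a hx))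
      exact ⟨⟨a, h a (List.mem_cons_self : a ∈ a :: t)⟩ :: L, by simp [hL]⟩
  have : {l : List Ordinal.{0} | ∀ x ∈ l, x ∈ s} ⊆
      Set.range (fun L : List s => L.map Subtype.val) := by
    intro l hl
    obtain ⟨L, hL⟩ := key l hl
    exact ⟨L, hL⟩
  exact (Set.countable_range _).mono this

lemma clIter_countable {F Z} (hZ : Z.Countable) : ∀ n, (clIter F Z n).Countable := by
  intro n
  induction n with
  | zero => exact hZ
  | succ n ih => exact ih.union ((countable_lists ih).image _)

lemma clw_countable {F Z} (hZ : Z.Countable) : (clw F Z).Countable :=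
  Set.countable_iUnion (clIter_countable hZ)

lemma clw_bounded {F Z A} (hF : IntoBelow A F) (hZ : ∀ z ∈ Z, z < A) :
    ∀ y ∈ clw F Z, y < A := by
  have main : ∀ n, ∀ y ∈ clIter F Z n, y < A := by
    intro n
    induction n with
    | zero => exact hZ
    | succ n ih =>
      rintro y (hy | ⟨l, hl, rfl⟩)
      · exact ih y hy
      · exact hF l (fun x hx => ih x (hl x hx))
  intro y hy
  obtain ⟨n, hn⟩ := Set.mem_iUnion.mp hy
  exact main n y hn

lemma clw_finitary {F Z} {y : Ordinal.{0}} (hy : y ∈ clw F Z) :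
    ∃ t : List Ordinal.{0}, (∀ x ∈ t, x ∈ Z) ∧ y ∈ clw F {x | x ∈ t} := by
  have main : clw F Z ⊆ {y | ∃ t : List Ordinal.{0}, (∀ x ∈ t, x ∈ Z) ∧ y ∈ clw F {x | x ∈ t}} := by
    apply clw_min
    · intro z hz
      exact ⟨[z], by simpa using hz, subset_clw (by simp)⟩
    · intro l hl
      have combine : ∀ l' : List Ordinal.{0}, (∀ x ∈ l', x ∈ l) →
          ∃ t : List Ordinal.{0}, (∀ x ∈ t, x ∈ Z) ∧ ∀ x ∈ l', x ∈ clw F {z | z ∈ t} := by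
        intro l'
        induction l' with
        | nil => exact fun _ => ⟨[], by simp, by simp⟩
        | cons a s ih =>
          intro h
          obtain ⟨t₁, ht₁Z, ht₁⟩ := ih (fun x hx => h x (List.mem_cons_of_mem a hx))
          obtain ⟨t₂, ht₂Z, ht₂⟩ := hl a (h a (List.mem_cons_self : a ∈ a :: s))
          refine ⟨t₂ ++ t₁, ?_, ?_⟩
          · intro x hx
            rcases List.mem_append.mp hx with hx | hx
            · exact ht₂Z x hx
            · exact ht₁Z x hx
          · intro x hx
            rcases List.mem_cons.mp hx with rfl | hx
            · exact clw_mono (fun z hz => by simp [List.mem_append]; exact Or.inl hz) ht₂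
            · exact clw_mono (fun z hz => by simp [List.mem_append]; exact Or.inr hz) (ht₁ x hx)
      obtain ⟨t, htZ, ht⟩ := combine l (fun x hx => hx)
      exact ⟨t, htZ, clw_closed l ht⟩
  exact main hy

lemma omega0_le_omega1 : Ordinal.omega0 ≤ omega1 := by
  rw [show Ordinal.omega0 = (Cardinal.aleph0).ord from Cardinal.ord_aleph0.symm]
  exact Cardinal.ord_le_ord.mpr (Cardinal.aleph0_le_aleph 1)

lemma omega1_le_omega2 : omega1 ≤ omega2 :=
  Cardinal.ord_le_ord.mpr (Cardinal.aleph_le_aleph.mpr (by norm_num))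

end WCCaux

/-- `WRP(ω₂)` implies `WCC⁺`. -/
theorem wrp_implies_wcc_plus (hWRP : WRP2) :
    ∀ F : List Ordinal.{0} → Ordinal, IntoBelow omega2 F →
      ∃ G : List Ordinal.{0} → Ordinal, IntoBelow omega2 G ∧
        ∀ X : Set Ordinal.{0}, X.Countable → (∀ x ∈ X, x < omega2) → ClosedUnder G X →
          ∃ Y : Set Ordinal.{0}, Y.Countable ∧ (∀ y ∈ Y, y < omega2) ∧
            X ⊂ Y ∧
            X ∩ {o | o < omega1} = Y ∩ {o | o < omega1} ∧
            ClosedUnder F Y := by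
  intro F hF
  classical
  set Ext : Set Ordinal.{0} → Prop := fun X =>
    ∃ Y : Set Ordinal.{0}, Y.Countable ∧ (∀ y ∈ Y, y < omega2) ∧
      X ⊂ Y ∧ X ∩ {o | o < omega1} = Y ∩ {o | o < omega1} ∧ ClosedUnder F Y with hExt
  set S : Set (Set Ordinal.{0}) :=
    {X | X.Countable ∧ (∀ x ∈ X, x < omega2) ∧ ClosedUnder F X ∧ ¬ Ext X} with hSdef
  have h0lt2 : (0 : Ordinal.{0}) < omega2 :=
    lt_of_lt_of_le (Ordinal.nat_lt_omega0 0) (omega0_le_omega1.trans omega1_le_omega2)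
  have h1lt2 : (1 : Ordinal.{0}) < omega2 := by
    have := lt_of_lt_of_le (Ordinal.nat_lt_omega0 1) (omega0_le_omega1.trans omega1_le_omega2)
    simpa using this
  by_cases hS : StationaryIn omega2 S
  · -- stationary case: contradiction with WRP
    exfalso
    obtain ⟨lam, hlam1, hlam2, hstat⟩ := hWRP S (fun X hX => ⟨hX.1, hX.2.1⟩) hS
    have homle : Ordinal.omega0 ≤ lam := omega0_le_omega1.trans hlam1
    have h0lam : (0 : Ordinal.{0}) < lam := lt_of_lt_of_le (Ordinal.nat_lt_omega0 0) homle
    -- enumeration functions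
    have hAt : ∀ t : List Ordinal.{0},
        ∃ e : ℕ → Ordinal.{0},
          ((clw F ({x | x ∈ t} ∪ {lam}) ∩ Set.Iio lam) ∪ {0}) = Set.range e := by
      intro t
      apply Set.Countable.exists_eq_range
      · exact (((clw_countable ((t.finite_toSet).countable.union
          (Set.countable_singleton lam))).mono Set.inter_subset_left).union
          (Set.countable_singleton 0))
      · exact ⟨0, Or.inr rfl⟩
    choose enum henum using hAt
    set idx : Ordinal.{0} → ℕ := Function.invFun (fun n : ℕ => (n : Ordinal.{0})) with hidx
    have hidx_cast : ∀ n : ℕ, idx (n : Ordinal.{0}) = n := by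
      intro n
      exact Function.leftInverse_invFun (fun a b h => Nat.cast_injective h) n
    set g : List Ordinal.{0} → Ordinal.{0} := fun s =>
      match s with
      | [] => 0
      | [a] => if a < Ordinal.omega0 then a + 1 else 0
      | a :: _ :: t => enum t (idx a) with hg
    have hginto : IntoBelow lam g := by
      intro s hs
      match s with
      | [] => exact h0lam
      | [a] =>
        show (if a < Ordinal.omega0 then a + 1 else 0) < lam
        split
        · next h =>
          obtain ⟨n, rfl⟩ := Ordinal.lt_omega0.mp h
          refine lt_of_lt_of_le ?_ homle
          rw [← Nat.cast_succ]
          exact Ordinal.nat_lt_omega0 (n + 1)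
        · exact h0lam
      | a :: b :: t =>
        show enum t (idx a) < lam
        have hmem : enum t (idx a) ∈ (clw F ({x | x ∈ t} ∪ {lam}) ∩ Set.Iio lam) ∪ {0} := by
          rw [henum t]; exact ⟨idx a, rfl⟩
        rcases hmem with h | h
        · exact h.2
        · simp only [Set.mem_singleton_iff] at h
          rw [h]; exact h0lam
    obtain ⟨X, hXc, hXlt, hXg, hXS, hXlam⟩ := hstat g hginto
    obtain ⟨-, hXlt2, hXF, hXnoext⟩ := hXS
    -- basic facts from g-closure
    have h0X : (0 : Ordinal.{0}) ∈ X := hXg [] (by simp)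
    have hnatX : ∀ n : ℕ, (n : Ordinal.{0}) ∈ X := by
      intro n
      induction n with
      | zero => simpa using h0X
      | succ n ih =>
        have h' : (if (n : Ordinal.{0}) < Ordinal.omega0 then (n : Ordinal.{0}) + 1 else 0) ∈ X :=
          hXg [(n : Ordinal.{0})] (by simpa using ih)
        rw [if_pos (Ordinal.nat_lt_omega0 n)] at h'
        simpa [Nat.cast_succ] using h'
    have hkey : ∀ t : List Ordinal.{0}, (∀ x ∈ t, x ∈ X) →
        ∀ y, y ∈ clw F ({x | x ∈ t} ∪ {lam}) → y < lam → y ∈ X := by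
      intro t ht y hy hylt
      have : y ∈ (clw F ({x | x ∈ t} ∪ {lam}) ∩ Set.Iio lam) ∪ {0} := Or.inl ⟨hy, hylt⟩
      rw [henum t] at this
      obtain ⟨k, hk⟩ := this
      have h' : enum t (idx (k : Ordinal.{0})) ∈ X := hXg ((k : Ordinal.{0}) :: 0 :: t) (by
        intro x hx
        rcases List.mem_cons.mp hx with rfl | hx
        · exact hnatX k
        rcases List.mem_cons.mp hx with rfl | hx
        · exact h0X
        · exact ht x hx)
      rwa [hidx_cast k, hk] at h'
    -- the extension Y
    set Y : Set Ordinal.{0} := clw F (X ∪ {lam}) with hY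
    have hXY : X ⊆ Y := fun x hx => subset_clw (Or.inl hx)
    have hlamY : lam ∈ Y := subset_clw (Or.inr rfl)
    have hlamX : lam ∉ X := fun h => lt_irrefl lam (hXlam lam h)
    apply hXnoext
    refine ⟨Y, ?_, ?_, ?_, ?_, clw_closed⟩
    · exact clw_countable (hXc.union (Set.countable_singleton lam))
    · exact clw_bounded hF (by
        intro z hz
        rcases hz with hz | hz
        · exact hXlt2 z hz
        · simp only [Set.mem_singleton_iff] at hz; subst hz; exact hlam2)
    · exact (Set.ssubset_iff_of_subset hXY).mpr ⟨lam, hlamY, hlamX⟩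
    · apply Set.Subset.antisymm
      · exact Set.inter_subset_inter_left _ hXY
      · rintro y ⟨hyY, hylt⟩
        refine ⟨?_, hylt⟩
        have hylam : y < lam := lt_of_lt_of_le hylt hlam1
        obtain ⟨t₀, ht₀Z, ht₀⟩ := clw_finitary hyY
        set t : List Ordinal.{0} := t₀.filter (fun x => decide (x ≠ lam)) with htdef
        have htX : ∀ x ∈ t, x ∈ X := by
          intro x hx
          rw [htdef, List.mem_filter] at hx
          have hne : x ≠ lam := by simpa using hx.2
          rcases ht₀Z x hx.1 with h | h
          · exact h
          · exact absurd h hne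
        have hsub : {x | x ∈ t₀} ⊆ {x | x ∈ t} ∪ {lam} := by
          intro x hx
          by_cases hxl : x = lam
          · exact Or.inr hxl
          · exact Or.inl (by
              rw [htdef]
              exact List.mem_filter.mpr ⟨hx, by simpa using hxl⟩)
        have : y ∈ clw F ({x | x ∈ t} ∪ {lam}) := clw_mono hsub ht₀
        exact hkey t htX y this hylam
  · -- non-stationary case: get a witness g₀ and merge with F
    rw [StationaryIn] at hS
    push_neg at hS
    obtain ⟨g₀, hg₀into, hg₀⟩ := hS
    refine ⟨fun s => match s with
      | [] => 0
      | [_] => 1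
      | a :: _ :: t => if a = 0 then g₀ t else F t, ?_, ?_⟩
    · intro s hs
      match s with
      | [] => exact h0lt2
      | [a] => exact h1lt2
      | a :: b :: t =>
        simp only
        split
        · exact hg₀into t (fun x hx => hs x (by simp [hx]))
        · exact hF t (fun x hx => hs x (by simp [hx]))
    · intro X hXc hXlt hXG
      have h0X : (0 : Ordinal.{0}) ∈ X := hXG [] (by simp)
      have h1X : (1 : Ordinal.{0}) ∈ X := hXG [0] (by simpa using h0X)
      have hXg₀ : ClosedUnder g₀ X := by
        intro t ht
        have := hXG ((0 : Ordinal.{0}) :: 0 :: t) (by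
          intro x hx
          rcases List.mem_cons.mp hx with rfl | hx
          · exact h0X
          rcases List.mem_cons.mp hx with rfl | hx
          · exact h0X
          · exact ht x hx)
        simpa using this
      have hXF : ClosedUnder F X := by
        intro t ht
        have := hXG ((1 : Ordinal.{0}) :: 0 :: t) (by
          intro x hx
          rcases List.mem_cons.mp hx with rfl | hx
          · exact h1X
          rcases List.mem_cons.mp hx with rfl | hx
          · exact h0X
          · exact ht x hx)
        simpa [one_ne_zero] using this
      have hnotS : X ∉ S := hg₀ X hXc hXlt hXg₀
      have hn : ¬ (X.Countable ∧ (∀ x ∈ X, x < omega2) ∧ ClosedUnder F X ∧ ¬ Ext X) := hnotS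
      have hext : Ext X := by
        by_contra hne
        exact hn ⟨hXc, hXlt, hXF, hne⟩
      exact hext
end

section
/- For every function f : ω₂^{<ω} → ω₂ and every stationary set T ⊆ ω₁, there exists a countable X ⊆ ω₂ closed under f such that X ∩ ω₁ is (the set of predecessors of) an ordinal α with α ∈ T, and for cofinally many β < ω₂ with β ∉ X, the set cl_f(X ∪ {β}) — the smallest subset of ω₂ containing X ∪ {β} and closed under f — satisfies cl_f(X ∪ {β}) ∩ ω₁ = X ∩ ω₁. -/
/-!
For each `β < ω₂`, the limit ordinals `i < ω₁` closed under `j ↦ sup (cl_f(j ∪ {β}) ∩ ω₁)` form a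
club, so one of them, `i_β`, lies in `T`. For such `i` the closure `cl_f(i ∪ {β})` contains no new
countable ordinal, being the increasing union of the `cl_f(j ∪ {β})` for `j < i`. As `β ↦ i_β` maps
`ω₂` into `ω₁`, a single `i` equals `i_β` for cofinally many `β`, and `X = cl_f(i)` works: for
those `β` above `sup X`, `cl_f(X ∪ {β}) ∩ ω₁ = i = X ∩ ω₁`.
-/

open Cardinal Ordinal Order Set

section Closure

variable {f : List Ordinal.{0} → Ordinal.{0}} {A : Ordinal.{0}} {Z W B : Set Ordinal.{0}}

theorem subset_clf : Z ⊆ clf f Z :=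
  fun _ hx => mem_sInter.2 fun _ hW => hW.1 hx

theorem clf_subset (hZW : Z ⊆ W) (hW : ClosedUnder f W) : clf f Z ⊆ W :=
  sInter_subset_of_mem ⟨hZW, hW⟩

theorem closedUnder_clf : ClosedUnder f (clf f Z) :=
  fun s hs => mem_sInter.2 fun W hW => hW.2 s fun x hx => mem_sInter.1 (hs x hx) W hW

theorem clf_mono (h : Z ⊆ W) : clf f Z ⊆ clf f W :=
  clf_subset (h.trans subset_clf) closedUnder_clf

theorem clf_subset_Iio (hf : IntoBelow A f) (hZ : Z ⊆ Iio A) : clf f Z ⊆ Iio A :=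
  clf_subset hZ hf

theorem List.exists_forall_mem_of_directed {α ι : Type*} [Nonempty ι] {S : ι → Set α}
    (hS : Directed (· ⊆ ·) S) {s : List α} (hs : ∀ x ∈ s, x ∈ ⋃ i, S i) :
    ∃ i, ∀ x ∈ s, x ∈ S i := by
  classical
  obtain ⟨i, hi⟩ := hS.exists_mem_subset_of_finset_subset_biUnion (s := s.toFinset)
    fun x hx => hs x (List.mem_toFinset.1 hx)
  exact ⟨i, fun x hx => hi (List.mem_toFinset.2 hx)⟩

theorem closedUnder_iUnion_of_directed {ι : Type*} [Nonempty ι] {S : ι → Set Ordinal.{0}}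
    (hS : Directed (· ⊆ ·) S) (hc : ∀ i, ClosedUnder f (S i)) :
    ClosedUnder f (⋃ i, S i) := by
  intro s hs
  obtain ⟨i, hi⟩ := List.exists_forall_mem_of_directed hS hs
  exact mem_iUnion.2 ⟨i, hc i s hi⟩

theorem countable_setOf_forall_mem_list {α : Type*} {A : Set α} (hA : A.Countable) :
    {s : List α | ∀ x ∈ s, x ∈ A}.Countable := by
  have : Countable A := hA.to_subtype
  exact (countable_range (List.map ((↑) : A → α))).mono fun s hs => CanLift.prf s hs

def clfStep (f : List Ordinal.{0} → Ordinal.{0}) (Z : Set Ordinal.{0}) : Set Ordinal.{0} :=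
  Z ∪ f '' {s | ∀ x ∈ s, x ∈ Z}

theorem clf_subset_iUnion_iterate_clfStep : clf f Z ⊆ ⋃ n, (clfStep f)^[n] Z := by
  have hmono : Monotone fun n => (clfStep f)^[n] Z := monotone_nat_of_le_succ fun n => by
    simp only [Function.iterate_succ_apply']
    exact subset_union_left
  refine clf_subset (subset_iUnion_of_subset 0 subset_rfl) fun s hs => ?_
  obtain ⟨n, hn⟩ := List.exists_forall_mem_of_directed hmono.directed_le hs
  rw [mem_iUnion]
  exact ⟨n + 1, by rw [Function.iterate_succ_apply']; exact Or.inr ⟨s, hn, rfl⟩⟩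

theorem clf_countable (hZ : Z.Countable) : (clf f Z).Countable := by
  refine (countable_iUnion fun n => ?_).mono clf_subset_iUnion_iterate_clfStep
  induction n with
  | zero => exact hZ
  | succ n ih =>
    rw [Function.iterate_succ_apply']
    exact ih.union ((countable_setOf_forall_mem_list ih).image f)

theorem clf_Iio_union_subset_iUnion {i : Ordinal.{0}} (hi : IsSuccLimit i) :
    clf f (Iio i ∪ B) ⊆ ⋃ j : Iio i, clf f (Iio (j : Ordinal) ∪ B) := by
  have : Nonempty (Iio i) := ⟨⟨0, hi.pos⟩⟩
  refine clf_subset ?_ (closedUnder_iUnion_of_directed ?_ fun _ => closedUnder_clf)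
  · rintro x (hx | hx)
    · exact mem_iUnion.2 ⟨⟨succ x, hi.succ_lt hx⟩, subset_clf (Or.inl (lt_succ x))⟩
    · exact mem_iUnion.2 ⟨⟨0, hi.pos⟩, subset_clf (Or.inr hx)⟩
  · exact Monotone.directed_le fun j k hjk =>
      clf_mono (union_subset_union_left B (Iio_subset_Iio hjk))

end Closure

theorem Set.Countable.sSup_lt_of_aleph0_lt_cof {s : Set Ordinal.{0}} {c : Ordinal.{0}}
    (hs : s.Countable) (hc : ℵ₀ < c.cof) (h : ∀ x ∈ s, x < c) : sSup s < c := by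
  refine sSup_lt_of_lt_cof ?_ h
  rw [← lift_cof.{0, 1}]
  exact hs.le_aleph0.trans_lt (by simpa only [lift_aleph0] using lift_lt.2 hc)

theorem sSup_image_Iio_lt {a c : Ordinal.{0}} (hac : a.card < c.cof) {δ : Ordinal → Ordinal}
    (hδ : ∀ i < a, δ i < c) : sSup (δ '' Iio a) < c := by
  refine sSup_lt_of_lt_cof ?_ (forall_mem_image.2 hδ)
  rw [← lift_cof.{0, 1}]
  exact mk_image_le.trans_lt (by rw [Cardinal.mk_Iio_ordinal]; exact lift_lt.2 hac)

theorem aleph0_lt_cof_omega1 : ℵ₀ < omega1.cof := by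
  rw [omega1, isRegular_aleph_one.cof_ord]
  exact aleph0_lt_aleph_one

theorem isRegular_aleph_two : Cardinal.IsRegular (ℵ_ 2) := by
  simpa [one_add_one_eq_two] using isRegular_aleph_add_one 1

theorem card_omega1_lt_cof_omega2 : omega1.card < omega2.cof := by
  rw [omega1, omega2, card_ord, isRegular_aleph_two.cof_ord]
  exact aleph_lt_aleph.2 one_lt_two

theorem aleph0_lt_cof_omega2 : ℵ₀ < omega2.cof :=
  (aleph0_lt_aleph_one.trans_le (by simp [omega1])).trans card_omega1_lt_cof_omega2

theorem omega1_lt_omega2 : omega1 < omega2 :=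
  ord_lt_ord.2 (aleph_lt_aleph.2 one_lt_two)

theorem isSuccLimit_omega1 : IsSuccLimit omega1 :=
  isSuccLimit_ord (aleph0_le_aleph 1)

theorem isSuccLimit_omega2 : IsSuccLimit omega2 :=
  isSuccLimit_ord (aleph0_le_aleph 2)

theorem countable_Iio_of_lt_omega1 {i : Ordinal.{0}} (hi : i < omega1) : (Iio i).Countable := by
  rw [← le_aleph0_iff_set_countable, Cardinal.mk_Iio_ordinal, lift_le_aleph0,
    ← lt_aleph_one_iff]
  exact lt_ord.1 hi

theorem exists_isSuccLimit_closurePoint_gt {g : Ordinal.{0} → Ordinal.{0}}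
    (hg : ∀ j < omega1, g j < omega1) {a : Ordinal.{0}} (ha : a < omega1) :
    ∃ i, a < i ∧ i < omega1 ∧ IsSuccLimit i ∧ ∀ j < i, g j < i := by
  set G : Ordinal.{0} → Ordinal.{0} := fun c => max (succ c) (sSup ((succ ∘ g) '' Iio c))
  have hbdd : ∀ c, BddAbove ((succ ∘ g) '' Iio c) := fun _ => Ordinal.bddAbove_of_small
  have hG : ∀ c, ∀ j < c, succ j < G c ∧ g j < G c := fun c j hj =>
    ⟨(succ_lt_succ hj).trans_le (le_max_left _ _),
      (lt_succ (g j)).trans_le <| (le_csSup (hbdd c) (mem_image_of_mem (succ ∘ g) hj)).trans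
        (le_max_right _ _)⟩
  have hGω : ∀ c < omega1, G c < omega1 := fun c hc =>
    max_lt (isSuccLimit_omega1.succ_lt hc) <|
      ((countable_Iio_of_lt_omega1 hc).image _).sSup_lt_of_aleph0_lt_cof aleph0_lt_cof_omega1 <|
        forall_mem_image.2 fun j hj => isSuccLimit_omega1.succ_lt (hg j (hj.trans hc))
  have hclosed : ∀ j < nfp G (succ a), succ j < nfp G (succ a) ∧ g j < nfp G (succ a) := by
    intro j hj
    obtain ⟨n, hn⟩ := lt_nfp_iff.1 hj
    have hle : G (G^[n] (succ a)) ≤ nfp G (succ a) := by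
      simpa only [← Function.iterate_succ_apply' G n] using iterate_le_nfp G (succ a) (n + 1)
    exact ⟨(hG _ j hn).1.trans_le hle, (hG _ j hn).2.trans_le hle⟩
  have hlt : a < nfp G (succ a) := (lt_succ a).trans_le (le_nfp G _)
  refine ⟨nfp G (succ a), hlt, ?_, ?_, fun j hj => (hclosed j hj).2⟩
  · exact nfp_lt_ord aleph0_lt_cof_omega1 hGω (isSuccLimit_omega1.succ_lt ha)
  · exact Ordinal.isSuccLimit_iff.2 ⟨(hlt.trans_le' zero_le).ne',
      isSuccPrelimit_iff_succ_lt.2 fun j hj => (hclosed j hj).1⟩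

theorem clubInOmega1_setOf_isSuccLimit_closurePoint {g : Ordinal.{0} → Ordinal.{0}}
    (hg : ∀ j < omega1, g j < omega1) :
    ClubInOmega1 {i | i < omega1 ∧ IsSuccLimit i ∧ ∀ j < i, g j < i} := by
  refine ⟨fun i hi => hi.1, fun a ha => ?_, fun D hD hne ⟨b, hb, hbD⟩ => ?_⟩
  · obtain ⟨i, hai, hi⟩ := exists_isSuccLimit_closurePoint_gt hg ha
    exact ⟨i, hi, hai⟩
  have hbdd : BddAbove D := ⟨b, hbD⟩
  refine ⟨(csSup_le hne hbD).trans_lt hb, ?_, fun j hj => ?_⟩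
  · by_contra hlim
    exact hlim (hD (csSup_mem_of_not_isSuccLimit hne hbdd hlim)).2.1
  · obtain ⟨x, hx, hjx⟩ := exists_lt_of_lt_csSup hne hj
    exact ((hD hx).2.2 j hjx).trans_le (le_csSup hbdd hx)

theorem exists_cofinal_fiber {a c : Ordinal.{0}} (hc : IsSuccLimit c) (hac : a.card < c.cof)
    {g : Ordinal.{0} → Ordinal.{0}} (hg : ∀ β < c, g β < a) :
    ∃ i, ∀ γ < c, ∃ β, γ < β ∧ β < c ∧ g β = i := by
  by_contra! H
  choose δ hδc hδ using H
  set b := sSup (δ '' Iio a)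
  have hb : b < c := sSup_image_Iio_lt hac fun i _ => hδc i
  have hβ : succ b < c := hc.succ_lt hb
  have hle : δ (g (succ b)) ≤ b := le_csSup Ordinal.bddAbove_of_small ⟨_, hg _ hβ, rfl⟩
  exact hδ _ (succ b) (lt_succ_of_le hle) hβ rfl

section Trace

variable {f : List Ordinal.{0} → Ordinal.{0}} {κ i : Ordinal.{0}} {B : Set Ordinal.{0}}

noncomputable def supClfBelow (f : List Ordinal.{0} → Ordinal.{0}) (κ : Ordinal.{0})
    (B : Set Ordinal.{0}) (j : Ordinal.{0}) : Ordinal.{0} :=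
  sSup (clf f (Iio j ∪ B) ∩ Iio κ)

theorem supClfBelow_lt_omega1 (hB : B.Countable) {j : Ordinal.{0}} (hj : j < omega1) :
    supClfBelow f omega1 B j < omega1 :=
  ((clf_countable ((countable_Iio_of_lt_omega1 hj).union hB)).mono inter_subset_left
    ).sSup_lt_of_aleph0_lt_cof aleph0_lt_cof_omega1 fun _ hx => hx.2

theorem clf_Iio_union_inter_Iio_subset (hi : IsSuccLimit i)
    (hB : ∀ j < i, supClfBelow f κ B j < i) : clf f (Iio i ∪ B) ∩ Iio κ ⊆ Iio i := by
  rintro x ⟨hx, hxκ⟩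
  obtain ⟨⟨j, hj⟩, hxj⟩ := mem_iUnion.1 (clf_Iio_union_subset_iUnion hi hx)
  exact (le_csSup (bddAbove_Iio.mono inter_subset_right) ⟨hxj, hxκ⟩).trans_lt (hB j hj)

theorem clf_clf_Iio_union_inter_Iio (hi : IsSuccLimit i) (hiκ : i ≤ κ)
    (hB : ∀ j < i, supClfBelow f κ B j < i) :
    clf f (clf f (Iio i) ∪ B) ∩ Iio κ = Iio i := by
  refine Subset.antisymm ?_ fun x hx => ⟨subset_clf (Or.inl (subset_clf hx)), hx.trans_le hiκ⟩
  have hsub : clf f (clf f (Iio i) ∪ B) ⊆ clf f (Iio i ∪ B) :=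
    clf_subset (union_subset (clf_mono subset_union_left) (subset_union_right.trans subset_clf))
      closedUnder_clf
  exact (inter_subset_inter_left _ hsub).trans (clf_Iio_union_inter_Iio_subset hi hB)

theorem clf_Iio_inter_Iio (hi : IsSuccLimit i) (hiκ : i ≤ κ)
    (hB : ∀ j < i, supClfBelow f κ B j < i) : clf f (Iio i) ∩ Iio κ = Iio i := by
  refine Subset.antisymm ?_ fun x hx => ⟨subset_clf hx, hx.trans_le hiκ⟩
  exact (inter_subset_inter_left _ (subset_union_left.trans subset_clf)).trans
    (clf_clf_Iio_union_inter_Iio hi hiκ hB).subset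

end Trace

/-- for every `f : ω₂^{<ω} → ω₂` and stationary `T ⊆ ω₁` there is a
countable `X ⊆ ω₂` closed under `f` with `X ∩ ω₁` an ordinal in `T`, such that for
cofinally many `β < ω₂` outside `X`, `cl_f(X ∪ {β}) ∩ ω₁ = X ∩ ω₁`. -/
theorem exists_model_with_cofinal_end_extensions
    (f : List Ordinal.{0} → Ordinal) (hf : IntoBelow omega2 f)
    (T : Set Ordinal.{0}) (hT : StationaryInOmega1 T) :
    ∃ X : Set Ordinal.{0}, X.Countable ∧ (∀ x ∈ X, x < omega2) ∧ ClosedUnder f X ∧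
      (∃ α ∈ T, X ∩ {o | o < omega1} = {o | o < α}) ∧
      ∀ γ < omega2, ∃ β, γ < β ∧ β < omega2 ∧ β ∉ X ∧
        clf f (X ∪ {β}) ∩ {o | o < omega1} = X ∩ {o | o < omega1} := by
  choose idx hidxT hidx using fun β => hT.2 _ <| clubInOmega1_setOf_isSuccLimit_closurePoint
    fun _ hj => supClfBelow_lt_omega1 (f := f) (countable_singleton β) hj
  obtain ⟨i, hi⟩ := exists_cofinal_fiber isSuccLimit_omega2 card_omega1_lt_cof_omega2
    fun β _ => hT.1 _ (hidxT β)
  obtain ⟨β₀, -, -, hβ₀⟩ := hi 0 isSuccLimit_omega2.pos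
  obtain ⟨hiω, hilim, hiβ₀⟩ := hβ₀ ▸ hidx β₀
  set X := clf f (Iio i)
  have hXcount : X.Countable := clf_countable (countable_Iio_of_lt_omega1 hiω)
  have hXω₂ : X ⊆ Iio omega2 :=
    clf_subset_Iio hf (Iio_subset_Iio (hiω.trans omega1_lt_omega2).le)
  have hXsup : sSup X < omega2 := hXcount.sSup_lt_of_aleph0_lt_cof aleph0_lt_cof_omega2 hXω₂
  have hXtrace : X ∩ Iio omega1 = Iio i := clf_Iio_inter_Iio hilim hiω.le hiβ₀
  refine ⟨X, hXcount, hXω₂, closedUnder_clf, ⟨i, hβ₀ ▸ hidxT β₀, hXtrace⟩,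
    fun γ hγ => ?_⟩
  obtain ⟨β, hγβ, hβ, hβi⟩ := hi _ (max_lt hγ hXsup)
  obtain ⟨-, -, hiβ⟩ := hβi ▸ hidx β
  refine ⟨β, (le_max_left _ _).trans_lt hγβ, hβ, fun hβX => ?_, ?_⟩
  · exact (le_csSup (bddAbove_Iio.mono hXω₂) hβX).not_gt ((le_max_right _ _).trans_lt hγβ)
  · exact (clf_clf_Iio_union_inter_Iio hilim hiω.le hiβ).trans hXtrace.symm
end
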